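/- Let A be a finite nonempty set, let h : Ω → A → ℝⁿ and c : Ω → A → ℝ be measurable with ∫ max_{a∈A} ‖h(ω)(a)‖² dμ < ∞ and ∫ max_{a∈A} c(ω)(a)² dμ < ∞. Let γ, ν ∈ (0,1), let λ₀ > 0 be such that every nonzero eigenvalue of Σ is at least λ₀, and let θ₁, θ₂ ∈ ℝⁿ with Δ := θ₁ − θ₂ in the range of the linear map v ↦ Σ v. Assume the contraction hypothesis ∫ (max_{a∈A} |⟨h(ω)(a), Δ⟩|)² dμ(ω) ≤ ((1 − ν)/γ)² Δᵀ Σ Δ. Define X(ω) = ⟨g(ω), Δ⟩ and W(ω) = max_{a∈A} (c(ω)(a) + ⟨h(ω)(a), θ₁⟩) − max_{a∈A} (c(ω)(a) + ⟨h(ω)(a), θ₂⟩). Then ∫ X² dμ − γ ∫ X W dμ ≥ ν λ₀ ‖Δ‖². -/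

import Mathlib

open MeasureTheory Matrix WithLp
open scoped RealInnerProductSpace

/-!
With `Δ = θ1 - θ2` and `X = ⟪g, Δ⟫`, one has `∫ X² = Δᵀ Σ Δ`. A maximum over `A` is
1-Lipschitz for the sup-norm, so `|W| ≤ max_a |⟪h a, Δ⟫|`, and the contraction hypothesis
becomes `∫ W² ≤ ((1 - ν) / γ)² ∫ X²`. Weighted AM-GM then gives `γ ∫ X W ≤ (1 - ν) Δᵀ Σ Δ`,
so the left-hand side is at least `ν Δᵀ Σ Δ`. Finally, `Δ` lies in the range of `Σ`, hence
is orthogonal to its kernel, and in an eigenbasis `Δᵀ Σ Δ ≥ λ₀ ‖Δ‖²`.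
-/

theorem Finset.sup'_sub_sup'_le_sup'_abs_sub {ι : Type*} {s : Finset ι} (hs : s.Nonempty)
    (f g : ι → ℝ) : s.sup' hs f - s.sup' hs g ≤ s.sup' hs fun i => |f i - g i| := by
  rw [sub_le_iff_le_add]
  refine Finset.sup'_le hs f fun i hi => ?_
  have hfg := (le_abs_self (f i - g i)).trans (Finset.le_sup' (fun i => |f i - g i|) hi)
  linarith [Finset.le_sup' g hi]

theorem Finset.abs_sup'_sub_sup'_le {ι : Type*} {s : Finset ι} (hs : s.Nonempty)
    (f g : ι → ℝ) : |s.sup' hs f - s.sup' hs g| ≤ s.sup' hs fun i => |f i - g i| := by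
  refine abs_sub_le_iff.mpr ⟨Finset.sup'_sub_sup'_le_sup'_abs_sub hs f g, ?_⟩
  simpa only [abs_sub_comm] using Finset.sup'_sub_sup'_le_sup'_abs_sub hs g f

theorem Finset.abs_sup'_add_inner_sub_sup'_add_inner_le {ι E : Type*} [NormedAddCommGroup E]
    [InnerProductSpace ℝ E] {s : Finset ι} (hs : s.Nonempty) (c : ι → ℝ) (x : ι → E) (u v : E) :
    |(s.sup' hs fun i => c i + ⟪x i, u⟫) - s.sup' hs fun i => c i + ⟪x i, v⟫| ≤
      s.sup' hs fun i => |⟪x i, u - v⟫| := by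
  simpa only [add_sub_add_left_eq_sub, ← inner_sub_right] using
    Finset.abs_sup'_sub_sup'_le hs (fun i => c i + ⟪x i, u⟫) (fun i => c i + ⟪x i, v⟫)

theorem Finset.measurable_sup'_apply {ι δ α : Type*} [MeasurableSpace δ] [MeasurableSpace α]
    [SemilatticeSup α] [MeasurableSup₂ α] {s : Finset ι} (hs : s.Nonempty) {f : ι → δ → α}
    (hf : ∀ i ∈ s, Measurable (f i)) : Measurable fun x => s.sup' hs fun i => f i x := by
  convert Finset.measurable_sup' hs hf using 1
  exact funext fun x => (Finset.sup'_apply hs f x).symm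

theorem Finset.sq_sup'_abs_inner_le {ι E : Type*} [NormedAddCommGroup E] [InnerProductSpace ℝ E]
    {s : Finset ι} (hs : s.Nonempty) (x : ι → E) (v : E) :
    (s.sup' hs fun i => |⟪x i, v⟫|) ^ 2 ≤ (s.sup' hs fun i => ‖x i‖ ^ 2) * ‖v‖ ^ 2 := by
  obtain ⟨i, hi, hmax⟩ := Finset.exists_mem_eq_sup' hs fun i => |⟪x i, v⟫|
  rw [hmax]
  calc |⟪x i, v⟫| ^ 2 ≤ (‖x i‖ * ‖v‖) ^ 2 :=
        pow_le_pow_left₀ (abs_nonneg _) (abs_real_inner_le_norm _ _) 2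
    _ ≤ (s.sup' hs fun i => ‖x i‖ ^ 2) * ‖v‖ ^ 2 := by
      rw [mul_pow]
      exact mul_le_mul_of_nonneg_right (Finset.le_sup' (fun i => ‖x i‖ ^ 2) hi) (by positivity)

namespace Matrix.IsHermitian
variable {ι : Type*} [Fintype ι] [DecidableEq ι] {M : Matrix ι ι ℝ} (hM : M.IsHermitian)
include hM

theorem inner_eigenvectorBasis_toEuclideanLin (i : ι) (x : EuclideanSpace ℝ ι) :
    ⟪hM.eigenvectorBasis i, toEuclideanLin M x⟫ =
      hM.eigenvalues i * ⟪hM.eigenvectorBasis i, x⟫ := by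
  have hb : toEuclideanLin M (hM.eigenvectorBasis i) = hM.eigenvalues i • hM.eigenvectorBasis i :=
    congrArg (toLp 2) (hM.mulVec_eigenvectorBasis i)
  rw [← isSymmetric_toEuclideanLin_iff.mpr hM, hb, real_inner_smul_left]

theorem mul_norm_sq_le_dotProduct_mulVec {lam0 : ℝ}
    (heig : ∀ (e : ℝ) (v : ι → ℝ), v ≠ 0 → M *ᵥ v = e • v → e ≠ 0 → lam0 ≤ e)
    {x w : EuclideanSpace ℝ ι} (hw : M *ᵥ ofLp w = ofLp x) :
    lam0 * ‖x‖ ^ 2 ≤ ofLp x ⬝ᵥ M *ᵥ ofLp x := by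
  have hx : toEuclideanLin M w = x := congrArg (toLp 2) hw
  have hquad :
      ofLp x ⬝ᵥ M *ᵥ ofLp x = ∑ i, hM.eigenvalues i * ⟪hM.eigenvectorBasis i, x⟫ ^ 2 := by
    rw [dotProduct_comm]
    change ⟪x, toEuclideanLin M x⟫ = _
    rw [← hM.eigenvectorBasis.sum_inner_mul_inner x (toEuclideanLin M x)]
    refine Finset.sum_congr rfl fun i _ => ?_
    rw [hM.inner_eigenvectorBasis_toEuclideanLin, real_inner_comm]
    ring
  rw [hquad, ← hM.eigenvectorBasis.sum_sq_inner_right, Finset.mul_sum]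
  refine Finset.sum_le_sum fun i _ => ?_
  by_cases hxi : ⟪hM.eigenvectorBasis i, x⟫ = 0
  · simp [hxi]
  -- `x` lies in the range of `M`, so it has no component along the kernel eigenvectors.
  have hei : hM.eigenvalues i ≠ 0 := fun h0 =>
    hxi (by rw [← hx, hM.inner_eigenvectorBasis_toEuclideanLin, h0, zero_mul])
  have hbi : ofLp (hM.eigenvectorBasis i) ≠ 0 := fun h0 =>
    hM.eigenvectorBasis.orthonormal.ne_zero i (by simpa using congrArg (toLp 2) h0)
  exact mul_le_mul_of_nonneg_right (heig _ _ hbi (hM.mulVec_eigenvectorBasis i) hei) (sq_nonneg _)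

end Matrix.IsHermitian

section
variable {Ω : Type*} [MeasurableSpace Ω] {μ : Measure Ω}

theorem integral_mul_le_of_integral_sq_le {f g : Ω → ℝ} (hf : MemLp f 2 μ) (hg : MemLp g 2 μ)
    {t : ℝ} (ht : 0 < t) (hfg : ∫ ω, g ω ^ 2 ∂μ ≤ t ^ 2 * ∫ ω, f ω ^ 2 ∂μ) :
    ∫ ω, f ω * g ω ∂μ ≤ t * ∫ ω, f ω ^ 2 ∂μ := by
  have hamgm : 2 * t * ∫ ω, f ω * g ω ∂μ ≤ t ^ 2 * ∫ ω, f ω ^ 2 ∂μ + ∫ ω, g ω ^ 2 ∂μ := by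
    rw [← integral_const_mul, ← integral_const_mul,
      ← integral_add (hf.integrable_sq.const_mul _) hg.integrable_sq]
    refine integral_mono ((hf.integrable_mul hg).const_mul _)
      ((hf.integrable_sq.const_mul _).add hg.integrable_sq) fun ω => ?_
    nlinarith [sq_nonneg (t * f ω - g ω)]
  nlinarith

theorem mul_integral_sq_le_integral_sq_sub_mul_integral_mul {f g : Ω → ℝ} (hf : MemLp f 2 μ)
    (hg : MemLp g 2 μ) {γ ν : ℝ} (hγ : 0 < γ) (hν : ν < 1)
    (hfg : ∫ ω, g ω ^ 2 ∂μ ≤ ((1 - ν) / γ) ^ 2 * ∫ ω, f ω ^ 2 ∂μ) :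
    ν * ∫ ω, f ω ^ 2 ∂μ ≤ ∫ ω, f ω ^ 2 ∂μ - γ * ∫ ω, f ω * g ω ∂μ := by
  have hcross := integral_mul_le_of_integral_sq_le hf hg (div_pos (sub_pos.mpr hν) hγ) hfg
  have hγcross := mul_le_mul_of_nonneg_left hcross hγ.le
  rw [← mul_assoc, mul_div_cancel₀ _ hγ.ne'] at hγcross
  linarith

theorem memLp_two_sup'_abs_inner {ι E : Type*} [NormedAddCommGroup E] [InnerProductSpace ℝ E]
    [MeasurableSpace E] [OpensMeasurableSpace E] [SecondCountableTopology E]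
    {s : Finset ι} (hs : s.Nonempty)
    {x : Ω → ι → E} (hmeas : ∀ i, Measurable fun ω => x ω i)
    (hint : Integrable (fun ω => s.sup' hs fun i => ‖x ω i‖ ^ 2) μ) (v : E) :
    MemLp (fun ω => s.sup' hs fun i => |⟪x ω i, v⟫|) 2 μ := by
  have hsup : Measurable fun ω => s.sup' hs fun i => |⟪x ω i, v⟫| :=
    Finset.measurable_sup'_apply hs fun i _ => ((hmeas i).inner measurable_const).abs
  refine (memLp_two_iff_integrable_sq hsup.aestronglyMeasurable).mpr ?_
  refine (hint.mul_const (‖v‖ ^ 2)).mono' (hsup.pow_const 2).aestronglyMeasurable ?_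
  refine Filter.Eventually.of_forall fun ω => ?_
  rw [Real.norm_of_nonneg (sq_nonneg _)]
  exact Finset.sq_sup'_abs_inner_le hs _ v

theorem integral_inner_sq_eq_dotProduct_mulVec {ι : Type*} [Fintype ι]
    {g : Ω → EuclideanSpace ℝ ι} (hg : MemLp g 2 μ) {M : Matrix ι ι ℝ}
    (hM : ∀ i j, M i j = ∫ ω, g ω i * g ω j ∂μ) (v : EuclideanSpace ℝ ι) :
    ∫ ω, ⟪g ω, v⟫ ^ 2 ∂μ = ofLp v ⬝ᵥ M *ᵥ ofLp v := by
  have hcoord : ∀ i, MemLp (fun ω => g ω i) 2 μ := fun i =>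
    (EuclideanSpace.proj i : EuclideanSpace ℝ ι →L[ℝ] ℝ).comp_memLp' hg
  have hint : ∀ i j, Integrable (fun ω => v i * v j * (g ω i * g ω j)) μ := fun i j =>
    ((hcoord i).integrable_mul (hcoord j)).const_mul _
  have hexpand : ∀ ω, ⟪g ω, v⟫ ^ 2 = ∑ i, ∑ j, v i * v j * (g ω i * g ω j) := fun ω => by
    simp only [EuclideanSpace.inner_eq_star_dotProduct, star_trivial, dotProduct, sq,
      Finset.sum_mul_sum]
    exact Finset.sum_congr rfl fun i _ => Finset.sum_congr rfl fun j _ => by ring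
  simp_rw [hexpand]
  rw [integral_finsetSum _ fun i _ => integrable_finsetSum _ fun j _ => hint i j]
  simp_rw [integral_finsetSum _ fun j _ => hint _ j, integral_const_mul, ← hM]
  simp only [dotProduct, mulVec, Finset.mul_sum]
  exact Finset.sum_congr rfl fun i _ => Finset.sum_congr rfl fun j _ => by ring

end

theorem stmt8_general
    {Ω : Type*} [MeasurableSpace Ω] (μ : Measure Ω)
    (n : ℕ)
    (g : Ω → EuclideanSpace ℝ (Fin n)) (hg : MemLp g 2 μ)
    (M : Matrix (Fin n) (Fin n) ℝ)
    (hM : ∀ i j, M i j = ∫ ω, g ω i * g ω j ∂μ)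
    (A : Type*) [Fintype A] [Nonempty A]
    (h : Ω → A → EuclideanSpace ℝ (Fin n)) (c : Ω → A → ℝ)
    (hhmeas : ∀ a, Measurable (fun ω => h ω a))
    (hcmeas : ∀ a, Measurable (fun ω => c ω a))
    (hhint : Integrable (fun ω =>
      Finset.univ.sup' Finset.univ_nonempty (fun a : A => ‖h ω a‖ ^ 2)) μ)
    (γ ν : ℝ) (hγ0 : 0 < γ) (hν0 : 0 < ν) (hν1 : ν < 1)
    (lam0 : ℝ)
    (heig : ∀ (e : ℝ) (v : Fin n → ℝ), v ≠ 0 → M.mulVec v = e • v → e ≠ 0 → lam0 ≤ e)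
    (θ1 θ2 : EuclideanSpace ℝ (Fin n))
    (hrange : ∃ w : EuclideanSpace ℝ (Fin n), M.mulVec w = θ1 - θ2)
    (hcontr : ∫ ω, (Finset.univ.sup' Finset.univ_nonempty
        (fun a : A => |⟪h ω a, θ1 - θ2⟫|)) ^ 2 ∂μ
      ≤ ((1 - ν) / γ) ^ 2 * ((θ1 - θ2) ⬝ᵥ M.mulVec (θ1 - θ2))) :
    ν * lam0 * ‖θ1 - θ2‖ ^ 2 ≤
      ∫ ω, ⟪g ω, θ1 - θ2⟫ ^ 2 ∂μ
        - γ * ∫ ω, ⟪g ω, θ1 - θ2⟫ *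
            ((Finset.univ.sup' Finset.univ_nonempty (fun a : A => c ω a + ⟪h ω a, θ1⟫))
              - Finset.univ.sup' Finset.univ_nonempty (fun a : A => c ω a + ⟪h ω a, θ2⟫)) ∂μ := by
  obtain ⟨w, hw⟩ := hrange
  simp only [← WithLp.ofLp_sub] at hw hcontr
  set Δ := θ1 - θ2
  set H := fun ω => Finset.univ.sup' Finset.univ_nonempty fun a : A => |⟪h ω a, Δ⟫|
  set W := fun ω =>
    (Finset.univ.sup' Finset.univ_nonempty fun a : A => c ω a + ⟪h ω a, θ1⟫)
      - Finset.univ.sup' Finset.univ_nonempty fun a : A => c ω a + ⟪h ω a, θ2⟫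
  have hWH (ω : Ω) : |W ω| ≤ H ω :=
    Finset.abs_sup'_add_inner_sub_sup'_add_inner_le _ (c ω) (h ω) θ1 θ2
  have hH : MemLp H 2 μ := memLp_two_sup'_abs_inner Finset.univ_nonempty hhmeas hhint Δ
  have hWmeas : Measurable W := by
    refine .sub ?_ ?_ <;> exact Finset.measurable_sup'_apply _ fun a _ =>
      (hcmeas a).add ((hhmeas a).inner measurable_const)
  have hW : MemLp W 2 μ := hH.of_le hWmeas.aestronglyMeasurable
    (.of_forall fun ω => (hWH ω).trans (le_abs_self _))
  have hX2 : ∫ ω, ⟪g ω, Δ⟫ ^ 2 ∂μ = ofLp Δ ⬝ᵥ M *ᵥ ofLp Δ :=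
    integral_inner_sq_eq_dotProduct_mulVec hg hM Δ
  have hW2 : ∫ ω, W ω ^ 2 ∂μ ≤ ((1 - ν) / γ) ^ 2 * ∫ ω, ⟪g ω, Δ⟫ ^ 2 ∂μ := by
    refine (integral_mono hW.integrable_sq hH.integrable_sq fun ω => ?_).trans (hX2 ▸ hcontr)
    exact sq_le_sq' (neg_le_of_abs_le (hWH ω)) (le_of_abs_le (hWH ω))
  have hMherm : M.IsHermitian := by
    ext i j
    simp only [conjTranspose_apply, star_trivial, hM, mul_comm]
  calc ν * lam0 * ‖Δ‖ ^ 2 ≤ ν * ∫ ω, ⟪g ω, Δ⟫ ^ 2 ∂μ := by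
        rw [hX2, mul_assoc]
        exact mul_le_mul_of_nonneg_left (hMherm.mul_norm_sq_le_dotProduct_mulVec heig hw) hν0.le
    _ ≤ _ := mul_integral_sq_le_integral_sq_sub_mul_integral_mul (hg.inner_const Δ) hW hγ0 hν1 hW2

/-- Abstract form of Lemma D.1 of the paper for neural Q-learning: the descent bound for
the max-Q difference term under the contraction (regularity) hypothesis. -/
theorem stmt8
    {Ω : Type*} [MeasurableSpace Ω] (μ : Measure Ω) [IsProbabilityMeasure μ]
    (n : ℕ) (hn : 0 < n)
    (g : Ω → EuclideanSpace ℝ (Fin n)) (hg : MemLp g 2 μ)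
    (M : Matrix (Fin n) (Fin n) ℝ)
    (hM : ∀ i j, M i j = ∫ ω, g ω i * g ω j ∂μ)
    (A : Type*) [Fintype A] [Nonempty A]
    (h : Ω → A → EuclideanSpace ℝ (Fin n)) (c : Ω → A → ℝ)
    (hhmeas : ∀ a, Measurable (fun ω => h ω a))
    (hcmeas : ∀ a, Measurable (fun ω => c ω a))
    (hhint : Integrable (fun ω =>
      Finset.univ.sup' Finset.univ_nonempty (fun a : A => ‖h ω a‖ ^ 2)) μ)
    (hcint : Integrable (fun ω =>
      Finset.univ.sup' Finset.univ_nonempty (fun a : A => c ω a ^ 2)) μ)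
    (γ ν : ℝ) (hγ0 : 0 < γ) (hγ1 : γ < 1) (hν0 : 0 < ν) (hν1 : ν < 1)
    (lam0 : ℝ) (hlam0 : 0 < lam0)
    (heig : ∀ (e : ℝ) (v : Fin n → ℝ), v ≠ 0 → M.mulVec v = e • v → e ≠ 0 → lam0 ≤ e)
    (θ1 θ2 : EuclideanSpace ℝ (Fin n))
    (hrange : ∃ w : EuclideanSpace ℝ (Fin n), M.mulVec w = θ1 - θ2)
    (hcontr : ∫ ω, (Finset.univ.sup' Finset.univ_nonempty
        (fun a : A => |⟪h ω a, θ1 - θ2⟫|)) ^ 2 ∂μ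
      ≤ ((1 - ν) / γ) ^ 2 * ((θ1 - θ2) ⬝ᵥ M.mulVec (θ1 - θ2))) :
    ν * lam0 * ‖θ1 - θ2‖ ^ 2 ≤
      ∫ ω, ⟪g ω, θ1 - θ2⟫ ^ 2 ∂μ
        - γ * ∫ ω, ⟪g ω, θ1 - θ2⟫ *
            ((Finset.univ.sup' Finset.univ_nonempty (fun a : A => c ω a + ⟪h ω a, θ1⟫))
              - Finset.univ.sup' Finset.univ_nonempty (fun a : A => c ω a + ⟪h ω a, θ2⟫)) ∂μ :=
  stmt8_general μ n g hg M hM A h c hhmeas hcmeas hhint γ ν hγ0 hν0 hν1 lam0 heig θ1 θ2 hrange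
    hcontr
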